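/- For any graph G, gd(G) ≥ ν⁼(G). -/

import Mathlib

/-- `Y` agrees with `X` on all diagonal entries and all entries indexed by edges of `G`. -/
def agreesOn {V : Type*} (G : SimpleGraph V) (X Y : Matrix V V ℝ) : Prop :=
  (∀ i, Y i i = X i i) ∧ ∀ i j, G.Adj i j → Y i j = X i j

/-- `gramDimLE G k`. -/
def gramDimLE {V : Type*} [Fintype V] (G : SimpleGraph V) (k : ℕ) : Prop :=
  ∀ X : Matrix V V ℝ, X.PosSemidef →
    ∃ Y : Matrix V V ℝ, Y.PosSemidef ∧ Y.rank ≤ k ∧ agreesOn G X Y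

/-- The Gram dimension of a graph. -/
noncomputable def gramDim {V : Type*} [Fintype V] (G : SimpleGraph V) : ℕ :=
  sInf {k | gramDimLE G k}

/-- The strong Arnold property for a matrix `M` relative to the graph `G`. -/
def StrongArnold {V : Type*} [Fintype V] (G : SimpleGraph V) (M : Matrix V V ℝ) : Prop :=
  ∀ X : Matrix V V ℝ, X.IsSymm → M * X = 0 → (∀ i, X i i = 0) →
    (∀ i j, G.Adj i j → X i j = 0) → X = 0

/-- The parameter `ν⁼(G)` : the maximum corank of a psd matrix supported on `G` satisfying the
strong Arnold property. -/
noncomputable def nuEq {V : Type*} [Fintype V] (G : SimpleGraph V) : ℕ :=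
  sSup {k | ∃ M : Matrix V V ℝ, M.PosSemidef ∧
    (∀ i j, i ≠ j → ¬G.Adj i j → M i j = 0) ∧ StrongArnold G M ∧
    k = Fintype.card V - M.rank}

/-!
If `M` witnesses `ν⁼(G) ≥ k`, the Gram matrix `X` of a basis of `ker M` is psd of rank `k` with
`M X = 0`. Any psd `Y` agreeing with `X` on the diagonal and on the edges has
`tr (M Y) = tr (M X) = 0`, because `M` vanishes everywhere else; for psd matrices this forces
`M Y = 0`, and the strong Arnold property applied to `X - Y` then gives `Y = X`. Hence every
such completion of `X` has rank `k`, and `gd(G) ≥ k`.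
-/

open scoped ComplexOrder

namespace Matrix

variable {m n 𝕜 : Type*} [Fintype n] [RCLike 𝕜]

open scoped MatrixOrder in
theorem PosSemidef.mul_eq_zero_of_trace_mul_eq_zero {M Y : Matrix n n 𝕜}
    (hM : M.PosSemidef) (hY : Y.PosSemidef) (h : (M * Y).trace = 0) : M * Y = 0 := by
  classical
  obtain ⟨A, rfl⟩ := CStarAlgebra.nonneg_iff_eq_star_mul_self.mp hM.nonneg
  obtain ⟨B, rfl⟩ := CStarAlgebra.nonneg_iff_eq_star_mul_self.mp hY.nonneg
  simp only [star_eq_conjTranspose] at h ⊢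
  -- `tr (Aᴴ A Bᴴ B) = tr ((A Bᴴ) (A Bᴴ)ᴴ)`
  have hAB : A * Bᴴ = 0 := by
    rw [← trace_mul_conjTranspose_self_eq_zero_iff, ← h, conjTranspose_mul,
      conjTranspose_conjTranspose, trace_mul_comm (Aᴴ * A)]
    simp only [Matrix.mul_assoc]
    rw [trace_mul_comm A]
    simp only [Matrix.mul_assoc]
  rw [Matrix.mul_assoc, ← Matrix.mul_assoc A, hAB, Matrix.zero_mul, Matrix.mul_zero]

theorem exists_posSemidef_mul_eq_zero_rank_eq (M : Matrix m n 𝕜) :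
    ∃ X : Matrix n n 𝕜, X.PosSemidef ∧ M * X = 0 ∧ X.rank = Fintype.card n - M.rank := by
  set K := LinearMap.ker M.mulVecLin
  let b := Module.finBasis 𝕜 K
  let C : Matrix n (Fin (Module.finrank 𝕜 K)) 𝕜 := of fun i j => (b j : n → 𝕜) i
  have hMC : M * C = 0 := by
    ext i j
    exact congrFun (LinearMap.mem_ker.mp (b j).2) i
  have hC : C.rank = Module.finrank 𝕜 K := by
    have hcols : Set.range C.col = K.subtype '' Set.range b := by
      rw [← Set.range_comp]; rfl
    rw [rank_eq_finrank_span_cols, hcols, Submodule.span_image, b.span_eq,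
      Submodule.map_subtype_top]
  refine ⟨C * Cᴴ, posSemidef_self_mul_conjTranspose C, by rw [← Matrix.mul_assoc, hMC,
    Matrix.zero_mul], ?_⟩
  have hM : M.rank + Module.finrank 𝕜 K = Fintype.card n := by
    rw [rank, LinearMap.finrank_range_add_finrank_ker, Module.finrank_fintype_fun_eq_card]
  rw [rank_self_mul_conjTranspose, hC]
  omega

end Matrix

section GramDimension

variable {V : Type*} [Fintype V] {G : SimpleGraph V}

theorem trace_mul_eq_of_agreesOn {M X Y : Matrix V V ℝ}
    (hM : ∀ i j, i ≠ j → ¬G.Adj i j → M i j = 0) (h : agreesOn G X Y) :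
    (M * Y).trace = (M * X).trace := by
  change ∑ i, ∑ j, M i j * Y j i = ∑ i, ∑ j, M i j * X j i
  refine Finset.sum_congr rfl fun i _ => Finset.sum_congr rfl fun j _ => ?_
  by_cases hij : i = j
  · rw [hij, h.1]
  by_cases hadj : G.Adj j i
  · rw [h.2 j i hadj]
  · rw [hM i j hij (fun h' => hadj h'.symm), zero_mul, zero_mul]

theorem StrongArnold.eq_of_agreesOn {M X Y : Matrix V V ℝ} (hM : StrongArnold G M)
    (hX : X.IsSymm) (hY : Y.IsSymm) (hMX : M * X = 0) (hMY : M * Y = 0) (h : agreesOn G X Y) :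
    X = Y := by
  refine sub_eq_zero.mp (hM (X - Y) (hX.sub hY) ?_ ?_ ?_)
  · rw [Matrix.mul_sub, hMX, hMY, sub_zero]
  · intro i
    rw [Matrix.sub_apply, h.1, sub_self]
  · intro i j hij
    rw [Matrix.sub_apply, h.2 i j hij, sub_self]

theorem gramDimLE_card (G : SimpleGraph V) : gramDimLE G (Fintype.card V) :=
  fun X hX => ⟨X, hX, X.rank_le_card_height, fun _ => rfl, fun _ _ _ => rfl⟩

theorem card_sub_rank_le_of_gramDimLE {M : Matrix V V ℝ} (hM : M.PosSemidef)
    (hsupp : ∀ i j, i ≠ j → ¬G.Adj i j → M i j = 0) (hSAP : StrongArnold G M) {k : ℕ}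
    (hk : gramDimLE G k) : Fintype.card V - M.rank ≤ k := by
  obtain ⟨X, hX, hMX, hXrank⟩ := M.exists_posSemidef_mul_eq_zero_rank_eq
  obtain ⟨Y, hY, hYrank, hXY⟩ := hk X hX
  have hMY : M * Y = 0 := hM.mul_eq_zero_of_trace_mul_eq_zero hY <| by
    rw [trace_mul_eq_of_agreesOn hsupp hXY, hMX, Matrix.trace_zero]
  rw [← hXrank, hSAP.eq_of_agreesOn (Matrix.isHermitian_iff_isSymm.mp hX.isHermitian)
    (Matrix.isHermitian_iff_isSymm.mp hY.isHermitian) hMX hMY hXY]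
  exact hYrank

end GramDimension

theorem nuEq_le_gramDim_general {V : Type*} [Fintype V] (G : SimpleGraph V) :
    nuEq G ≤ gramDim G :=
  csSup_le' fun _ ⟨_, hM, hsupp, hSAP, hk⟩ => hk ▸
    le_csInf ⟨_, gramDimLE_card G⟩ fun _ => card_sub_rank_le_of_gramDimLE hM hsupp hSAP

/-- For any graph `G`, `gd(G) ≥ ν⁼(G)`. -/
theorem nuEq_le_gramDim {V : Type*} [Fintype V] [DecidableEq V] (G : SimpleGraph V) :
    nuEq G ≤ gramDim G :=
  nuEq_le_gramDim_general G
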